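/- Let A = (Q, Σ, δ, P) be an exact ε-machine with n = |Q| states and steady state distribution π, and let π_min = min_q π_q, π_max = max_q π_q. Then for each L ≥ 1, π_min · ‖T(A₂)^L‖₁ ≤ P_π(NSYN_L) ≤ n² · π_max · ‖T(A₂)^L‖₁, where ‖·‖₁ denotes the maximum row sum of a nonnegative matrix. -/

import Mathlib

open scoped BigOperators ENNReal

attribute [local instance] Classical.propDecidable

variable {Q A : Type*}

/-- Extension of a partial transition function to words. -/
def stepWord (δ : Q → A → Option Q) : Q → List A → Option Q
  | q, [] => some q
  | q, a :: w => (δ q a).bind fun q' => stepWord δ q' w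

/-- Probability of generating a word from a given state. -/
noncomputable def probWord (P : Q → A → ℝ) (δ : Q → A → Option Q) : Q → List A → ℝ
  | _, [] => 1
  | p, a :: w => P p a * ((δ p a).elim 0 fun p' => probWord P δ p' w)

/-- `w` is a reset word: the set of defined images of all states under `w` is a singleton. -/
def IsResetWord (δ : Q → A → Option Q) (w : List A) : Prop :=
  ∃ r : Q, (∃ q : Q, stepWord δ q w = some r) ∧ ∀ q s : Q, stepWord δ q w = some s → s = r

/-- `w` merges the pair `{p, q}` : the set of defined images of `p` and `q` under `w`
is a singleton. -/
def MergedBy (δ : Q → A → Option Q) (p q : Q) (w : List A) : Prop :=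
  ∃ r : Q, (stepWord δ p w = some r ∨ stepWord δ q w = some r) ∧
    (∀ s : Q, stepWord δ p w = some s → s = r) ∧ ∀ s : Q, stepWord δ q w = some s → s = r

/-- A deadlock pair : a pair of distinct states that no word merges. -/
def IsDeadlockPair (δ : Q → A → Option Q) (p q : Q) : Prop :=
  p ≠ q ∧ ∀ w : List A, ¬ MergedBy δ p q w

/-- An ε-machine. -/
structure EpsMachine (Q A : Type*) [Fintype Q] [Fintype A] : Type _ where
  δ : Q → A → Option Q
  P : Q → A → ℝ
  nonneg : ∀ q a, 0 ≤ P q a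
  sum_one : ∀ q : Q, ∑ a : A, P q a = 1
  zero_iff : ∀ q a, P q a = 0 ↔ δ q a = none
  strong_conn : ∀ p q : Q, ∃ w : List A, stepWord δ p w = some q
  card_alpha : 1 < Fintype.card A
  nonequiv : ∀ p q : Q, p ≠ q → ∃ u : List A, probWord P δ p u ≠ probWord P δ q u

/-- An ε-machine is exact if it admits a reset word. -/
def IsExact [Fintype Q] [Fintype A] (M : EpsMachine Q A) : Prop :=
  ∃ w : List A, IsResetWord M.δ w

/-- Transition function of the pair semi-machine `A₂`. -/
noncomputable def pairStep (δ : Q → A → Option Q) (pq : Q × Q) (a : A) : Option (Q × Q) :=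
  match δ pq.1 a, δ pq.2 a with
  | some p', some q' => if p' = q' then none else some (p', q')
  | _, _ => none

/-- Weights of the pair semi-machine `A₂`. -/
noncomputable def pairP (δ : Q → A → Option Q) (P : Q → A → ℝ) (pq : Q × Q) (a : A) : ℝ :=
  if pairStep δ pq a = none then 0 else P pq.1 a

/-- The states of the pair semi-machine : ordered pairs of distinct states. -/
abbrev PairState (Q : Type*) := {pq : Q × Q // pq.1 ≠ pq.2}

variable [Fintype Q] [Fintype A]

/-- The transition probability matrix `T(A₂)` of the pair semi-machine. -/
noncomputable def pairMatrix (δ : Q → A → Option Q) (P : Q → A → ℝ) :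
    Matrix (PairState Q) (PairState Q) ℝ :=
  fun s t => ∑ a : A, if pairStep δ s.val a = some t.val then P s.val.1 a else 0

/-- `R^L_{p,q}` : the sum of the `(p,q)`-th row entries of `T(A₂)^L`. -/
noncomputable def RLrow (δ : Q → A → Option Q) (P : Q → A → ℝ) (L : ℕ) (s : PairState Q) : ℝ :=
  ∑ t : PairState Q, (pairMatrix δ P ^ L) s t

/-- `R^L_p = ∑_{q ≠ p} R^L_{p,q}`. -/
noncomputable def RLp (δ : Q → A → Option Q) (P : Q → A → ℝ) (L : ℕ) (p : Q) : ℝ :=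
  ∑ q : Q, if h : p = q then 0 else RLrow δ P L ⟨(p, q), h⟩

/-- `MaxR^L_p = max_{q ≠ p} R^L_{p,q}`. -/
noncomputable def MaxRLp (δ : Q → A → Option Q) (P : Q → A → ℝ) (L : ℕ) (p : Q) : ℝ :=
  sSup {x : ℝ | ∃ (q : Q) (h : p ≠ q), x = RLrow δ P L ⟨(p, q), h⟩}

/-- `π` is a positive stationary (steady state) probability distribution of the Markov chain
on the machine states with transition probabilities `P(p → q) = ∑_{x : p.x = q} P_p(x)`. -/
def EpsIsStationary (δ : Q → A → Option Q) (P : Q → A → ℝ) (π : Q → ℝ) : Prop :=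
  (∀ q, 0 < π q) ∧ (∑ q : Q, π q = 1) ∧
    ∀ q : Q, π q = ∑ p : Q, π p * ∑ a : A, if δ p a = some q then P p a else 0

/-- `P_π(w) = ∑_q π_q P_q(w)`. -/
noncomputable def Ppi (δ : Q → A → Option Q) (P : Q → A → ℝ) (π : Q → ℝ) (w : List A) : ℝ :=
  ∑ q : Q, π q * probWord P δ q w

/-- `P_π(NSYN_L)` : the probability of generating a non-reset word of length `L`. -/
noncomputable def nsynProb (δ : Q → A → Option Q) (P : Q → A → ℝ) (π : Q → ℝ) (L : ℕ) : ℝ :=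
  ∑ w : Fin L → A, if IsResetWord δ (List.ofFn w) then 0 else Ppi δ P π (List.ofFn w)

/-- The maximum row sum (the `‖·‖₁` norm of a nonnegative matrix). -/
noncomputable def maxRowSum {n : Type*} [Fintype n] (T : Matrix n n ℝ) : ℝ :=
  sSup {x : ℝ | ∃ s : n, x = ∑ t : n, T s t}

/-- The belief distribution `φ(w)` of the observer after the machine generated `w`. -/
noncomputable def belief (δ : Q → A → Option Q) (P : Q → A → ℝ) (π : Q → ℝ)
    (w : List A) (q : Q) : ℝ :=
  (∑ p : Q, if stepWord δ p w = some q then π p * probWord P δ p w else 0) / Ppi δ P π w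

/-- `Q_L(w) = 1 - max_q φ(w)_q` : the combined probability of all states other than the
most likely one. -/
noncomputable def QLw (δ : Q → A → Option Q) (P : Q → A → ℝ) (π : Q → ℝ) (w : List A) : ℝ :=
  1 - sSup (Set.range (belief δ P π w))

/-- `P(Q_L > b^L)`. -/
noncomputable def probQLgt (δ : Q → A → Option Q) (P : Q → A → ℝ) (π : Q → ℝ)
    (b : ℝ) (L : ℕ) : ℝ :=
  ∑ w : Fin L → A, if b ^ L < QLw δ P π (List.ofFn w) then Ppi δ P π (List.ofFn w) else 0

/-- The prediction rate constant `prc(A)` : the infimum of all `a > 0` such that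
`P(Q_L > a^L) → 0` as `L → ∞`. -/
noncomputable def prc (δ : Q → A → Option Q) (P : Q → A → ℝ) (π : Q → ℝ) : ℝ :=
  sInf {a : ℝ | 0 < a ∧
    Filter.Tendsto (fun L : ℕ => probQLgt δ P π a L) Filter.atTop (nhds 0)}

/-- `E(Q_L^{1/L})`. -/
noncomputable def EQL (δ : Q → A → Option Q) (P : Q → A → ℝ) (π : Q → ℝ) (L : ℕ) : ℝ :=
  ∑ w : Fin L → A, Ppi δ P π (List.ofFn w) * QLw δ P π (List.ofFn w) ^ ((L : ℝ)⁻¹)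

/-- `E(1/Q_L^{1/L})`, computed in the extended reals (with `1/0 = ∞`). -/
noncomputable def EinvQL (δ : Q → A → Option Q) (P : Q → A → ℝ) (π : Q → ℝ) (L : ℕ) : ℝ≥0∞ :=
  ∑ w : Fin L → A, ENNReal.ofReal (Ppi δ P π (List.ofFn w)) *
    (ENNReal.ofReal (QLw δ P π (List.ofFn w)))⁻¹ ^ ((L : ℝ)⁻¹)

/-- A deadlock component : a nonempty, strongly connected set of deadlock pairs closed
under the action of all letters. -/
def IsDeadlockComponent (δ : Q → A → Option Q) (S : Set (Q × Q)) : Prop :=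
  S.Nonempty ∧ (∀ pq ∈ S, IsDeadlockPair δ pq.1 pq.2) ∧
    (∀ pq ∈ S, ∀ a : A, ∀ r : Q × Q, pairStep δ pq a = some r → r ∈ S) ∧
    ∀ pq ∈ S, ∀ rs ∈ S, ∃ w : List A, stepWord (pairStep δ) pq w = some rs

/-- The states of the edge machine `M_edge` of a component `S` of the pair semi-machine :
pairs `(x, k)` with `k ∈ S` and `P_k(x) > 0`. -/
abbrev EdgeState (δ : Q → A → Option Q) (P : Q → A → ℝ) (S : Set (Q × Q)) :=
  {e : A × (Q × Q) // e.2 ∈ S ∧ 0 < pairP δ P e.2 e.1}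

/-- `ρ` is a stationary (equilibrium) distribution of the edge machine `M_edge`,
whose transition probabilities are `P((x,k) → (y,j)) = P_j(y)·I(x,k,j)`. -/
def IsEdgeStationary (δ : Q → A → Option Q) (P : Q → A → ℝ) (S : Set (Q × Q))
    (ρ : EdgeState δ P S → ℝ) : Prop :=
  (∀ r, 0 ≤ ρ r) ∧ (∑ r : EdgeState δ P S, ρ r = 1) ∧
    ∀ t : EdgeState δ P S, ρ t = ∑ s : EdgeState δ P S, ρ s *
      (if pairStep δ s.val.2 s.val.1 = some t.val.2 then pairP δ P t.val.2 t.val.1 else 0)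

/-- `E_M = ∑_r ρ_r F(r)` where `F((x,(p,q))) = ln (P_p(x) / P_q(x))`. -/
noncomputable def EMval (δ : Q → A → Option Q) (P : Q → A → ℝ) (S : Set (Q × Q))
    (ρ : EdgeState δ P S → ℝ) : ℝ :=
  ∑ r : EdgeState δ P S, ρ r * Real.log (P r.val.2.1 r.val.1 / P r.val.2.2 r.val.1)

/-! Row `(p, q)` of `T(A₂)^L` sums `P_p(w)` over the words `w` of length `L` that are defined on
both `p` and `q` and do not merge them. Such a word is not a reset word and `P_π(w) ≥ π_min P_p(w)`,
so a maximal row gives the lower bound. Conversely, if `w` is not a reset word, every state `p`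
with `P_p(w) > 0` has a partner `q` that `w` does not merge with it, so `P_π(w) ≤ π_max ∑_p P_p(w)`
is at most `π_max` times the contribution of `w` to the `n (n - 1)` row sums. -/

section MaxRowSum

variable {n : Type*} [Fintype n] (T : Matrix n n ℝ)

theorem maxRowSum_eq_sSup_range : maxRowSum T = sSup (Set.range fun s => ∑ t, T s t) := by
  simp only [maxRowSum, Set.range, eq_comm]

theorem sum_le_maxRowSum (s : n) : ∑ t, T s t ≤ maxRowSum T := by
  rw [maxRowSum_eq_sSup_range]
  exact le_csSup (Set.finite_range _).bddAbove ⟨s, rfl⟩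

theorem exists_sum_eq_maxRowSum [Nonempty n] : ∃ s, ∑ t, T s t = maxRowSum T := by
  rw [maxRowSum_eq_sSup_range]
  exact (Set.range_nonempty _).csSup_mem (Set.finite_range _)

theorem maxRowSum_of_isEmpty [IsEmpty n] : maxRowSum T = 0 := by
  rw [maxRowSum_eq_sSup_range, Set.range_eq_empty, Real.sSup_empty]

theorem maxRowSum_nonneg (hT : ∀ s, 0 ≤ ∑ t, T s t) : 0 ≤ maxRowSum T := by
  rw [maxRowSum_eq_sSup_range]
  exact Real.iSup_nonneg hT

theorem sum_sum_le_card_mul_maxRowSum :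
    ∑ s, ∑ t, T s t ≤ Fintype.card n * maxRowSum T := by
  simpa using Finset.sum_le_card_nsmul Finset.univ _ _ fun s _ => sum_le_maxRowSum T s

end MaxRowSum

section PairMachine

variable {Q A : Type*} {δ : Q → A → Option Q}

theorem pairStep_eq_some_iff {pq r : Q × Q} {a : A} :
    pairStep δ pq a = some r ↔ δ pq.1 a = some r.1 ∧ δ pq.2 a = some r.2 ∧ r.1 ≠ r.2 := by
  obtain ⟨r₁, r₂⟩ := r
  unfold pairStep
  rcases δ pq.1 a with _ | p' <;> rcases δ pq.2 a with _ | q' <;>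
    simp only [reduceCtorEq, false_and, and_false]
  split_ifs with h
  · simp only [Option.some.injEq, false_iff]
    rintro ⟨rfl, rfl, hne⟩
    exact hne h
  · simp only [Option.some.injEq, Prod.mk.injEq]
    grind

theorem stepWord_pairStep_eq_some_iff {pq r : Q × Q} (hpq : pq.1 ≠ pq.2) (w : List A) :
    stepWord (pairStep δ) pq w = some r ↔
      stepWord δ pq.1 w = some r.1 ∧ stepWord δ pq.2 w = some r.2 ∧ r.1 ≠ r.2 := by
  induction w generalizing pq with
  | nil =>
    simp only [stepWord, Option.some.injEq]
    constructor
    · rintro rfl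
      exact ⟨rfl, rfl, hpq⟩
    · rintro ⟨h₁, h₂, -⟩
      exact Prod.ext h₁ h₂
  | cons a w ih =>
    simp only [stepWord]
    rcases hstep : pairStep δ pq a with _ | m
    · simp only [Option.bind_none, reduceCtorEq, false_iff, Option.bind_eq_some_iff]
      rintro ⟨⟨p', hp', hr₁⟩, ⟨q', hq', hr₂⟩, hne⟩
      have hpq' : p' = q' := by
        by_contra h
        rw [(pairStep_eq_some_iff (r := (p', q'))).2 ⟨hp', hq', h⟩] at hstep
        exact Option.some_ne_none _ hstep
      subst hpq'
      exact hne (Option.some.inj (hr₁.symm.trans hr₂))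
    · obtain ⟨hm₁, hm₂, hm⟩ := pairStep_eq_some_iff.1 hstep
      simp only [Option.bind_some, hm₁, hm₂]
      exact ih hm

theorem not_isResetWord_of_isSome_stepWord_pairStep {pq : Q × Q} (hpq : pq.1 ≠ pq.2)
    {w : List A} (h : (stepWord (pairStep δ) pq w).isSome) : ¬ IsResetWord δ w := by
  obtain ⟨r, hr⟩ := Option.isSome_iff_exists.1 h
  obtain ⟨hr₁, hr₂, hne⟩ := (stepWord_pairStep_eq_some_iff hpq w).1 hr
  rintro ⟨t, -, ht⟩
  exact hne ((ht _ _ hr₁).trans (ht _ _ hr₂).symm)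

theorem exists_isSome_stepWord_pairStep_of_not_isResetWord {w : List A}
    (hw : ¬ IsResetWord δ w) {p t : Q} (ht : stepWord δ p w = some t) :
    ∃ s : PairState Q, s.val.1 = p ∧ (stepWord (pairStep δ) s.val w).isSome := by
  obtain ⟨q, u, hu, hne⟩ : ∃ q u, stepWord δ q w = some u ∧ t ≠ u := by
    by_contra! h
    exact hw ⟨t, ⟨p, ht⟩, fun q u hu => (h q u hu).symm⟩
  have hpq : p ≠ q := by
    rintro rfl
    exact hne (Option.some.inj (ht.symm.trans hu))
  refine ⟨⟨(p, q), hpq⟩, rfl, Option.isSome_iff_exists.2 ⟨(t, u), ?_⟩⟩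
  exact (stepWord_pairStep_eq_some_iff hpq w).2 ⟨ht, hu, hne⟩

variable {P : Q → A → ℝ}

theorem probWord_nonneg (hP : ∀ q a, 0 ≤ P q a) (q : Q) (w : List A) :
    0 ≤ probWord P δ q w := by
  induction w generalizing q with
  | nil => simp [probWord]
  | cons a w ih =>
    refine mul_nonneg (hP q a) ?_
    cases δ q a
    · exact le_rfl
    · exact ih _

theorem probWord_eq_zero_of_stepWord_eq_none (hP : ∀ q a, δ q a = none → P q a = 0) {q : Q}
    {w : List A} (h : stepWord δ q w = none) : probWord P δ q w = 0 := by
  induction w generalizing q with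
  | nil => simp [stepWord] at h
  | cons a w ih =>
    simp only [probWord]
    rcases hq : δ q a with _ | q'
    · rw [hP q a hq, zero_mul]
    · simp only [stepWord, hq, Option.bind_some] at h
      rw [Option.elim_some, ih h, mul_zero]

noncomputable def pairWordProb (δ : Q → A → Option Q) (P : Q → A → ℝ) (pq : Q × Q)
    (w : List A) : ℝ :=
  if (stepWord (pairStep δ) pq w).isSome then probWord P δ pq.1 w else 0

theorem pairWordProb_nonneg (hP : ∀ q a, 0 ≤ P q a) (pq : Q × Q) (w : List A) :
    0 ≤ pairWordProb δ P pq w :=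
  ite_nonneg (probWord_nonneg hP _ _) le_rfl

variable [Fintype Q]

theorem sum_probWord_le_sum_pairWordProb (hP : ∀ q a, 0 ≤ P q a)
    (hP₀ : ∀ q a, δ q a = none → P q a = 0) {w : List A} (hw : ¬ IsResetWord δ w) :
    ∑ q, probWord P δ q w ≤ ∑ s : PairState Q, pairWordProb δ P s.val w := by
  rw [← Finset.sum_fiberwise Finset.univ fun s : PairState Q => s.val.1]
  refine Finset.sum_le_sum fun p _ => ?_
  rcases hp : stepWord δ p w with _ | t
  · rw [probWord_eq_zero_of_stepWord_eq_none hP₀ hp]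
    exact Finset.sum_nonneg fun s _ => pairWordProb_nonneg hP _ _
  · obtain ⟨s, rfl, hs⟩ := exists_isSome_stepWord_pairStep_of_not_isResetWord hw hp
    calc probWord P δ s.val.1 w = pairWordProb δ P s.val w := (if_pos hs).symm
      _ ≤ _ := Finset.single_le_sum (fun s _ => pairWordProb_nonneg hP _ w) (by simp)

variable {π : Q → ℝ}

theorem Ppi_nonneg (hP : ∀ q a, 0 ≤ P q a) (hπ : ∀ q, 0 ≤ π q) (w : List A) :
    0 ≤ Ppi δ P π w :=
  Finset.sum_nonneg fun q _ => mul_nonneg (hπ q) (probWord_nonneg hP q w)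

theorem card_pairState_le : (Fintype.card (PairState Q) : ℝ) ≤ (Fintype.card Q : ℝ) ^ 2 := by
  have h := Fintype.card_subtype_le fun pq : Q × Q => pq.1 ≠ pq.2
  rw [Fintype.card_prod, ← sq] at h
  exact_mod_cast h

variable [Fintype A]

theorem sum_words_succ {M : Type*} [AddCommMonoid M] (L : ℕ) (f : List A → M) :
    ∑ w : Fin (L + 1) → A, f (List.ofFn w) = ∑ a : A, ∑ v : Fin L → A, f (a :: List.ofFn v) := by
  rw [← (Fin.consEquiv fun _ => A).sum_comp, Fintype.sum_prod_type]
  simp [Fin.consEquiv]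

theorem sum_pairMatrix_mul (P : Q → A → ℝ) (s : PairState Q) (g : Q × Q → ℝ) :
    ∑ u : PairState Q, pairMatrix δ P s u * g u.val =
      ∑ a : A, (pairStep δ s.val a).elim 0 fun r => P s.val.1 a * g r := by
  simp only [pairMatrix, Finset.sum_mul]
  rw [Finset.sum_comm]
  refine Finset.sum_congr rfl fun a _ => ?_
  rcases h : pairStep δ s.val a with _ | r
  · simp
  · rw [Finset.sum_eq_single ⟨r, (pairStep_eq_some_iff.1 h).2.2⟩]
    · simp
    · intro u _ hu
      rw [if_neg fun h => hu (Subtype.ext (Option.some.inj h).symm), zero_mul]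
    · simp

theorem pairMatrix_pow_apply (P : Q → A → ℝ) (L : ℕ) (s t : PairState Q) :
    (pairMatrix δ P ^ L) s t = ∑ w : Fin L → A,
      if stepWord (pairStep δ) s.val (List.ofFn w) = some t.val then
        probWord P δ s.val.1 (List.ofFn w) else 0 := by
  induction L generalizing s with
  | zero => simp [Matrix.one_apply, stepWord, probWord, Subtype.ext_iff]
  | succ L ih =>
    rw [pow_succ', Matrix.mul_apply]
    simp only [ih]
    rw [sum_pairMatrix_mul P s fun r => ∑ v : Fin L → A,
      if stepWord (pairStep δ) r (List.ofFn v) = some t.val then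
        probWord P δ r.1 (List.ofFn v) else 0,
      sum_words_succ L fun w => if stepWord (pairStep δ) s.val w = some t.val then
        probWord P δ s.val.1 w else 0]
    refine Finset.sum_congr rfl fun a _ => ?_
    rcases h : pairStep δ s.val a with _ | r
    · simp [stepWord, h]
    · obtain ⟨h₁, -, -⟩ := pairStep_eq_some_iff.1 h
      simp [stepWord, probWord, h, h₁, Finset.mul_sum, mul_ite]

theorem RLrow_eq_sum_pairWordProb (P : Q → A → ℝ) (L : ℕ) (s : PairState Q) :
    RLrow δ P L s = ∑ w : Fin L → A, pairWordProb δ P s.val (List.ofFn w) := by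
  simp only [RLrow, pairMatrix_pow_apply]
  rw [Finset.sum_comm]
  refine Finset.sum_congr rfl fun w _ => ?_
  unfold pairWordProb
  rcases h : stepWord (pairStep δ) s.val (List.ofFn w) with _ | r
  · simp
  · rw [Finset.sum_eq_single ⟨r, ((stepWord_pairStep_eq_some_iff s.prop _).1 h).2.2⟩]
    · simp
    · intro u _ hu
      rw [if_neg fun h => hu (Subtype.ext (Option.some.inj h).symm)]
    · simp

theorem RLrow_nonneg (hP : ∀ q a, 0 ≤ P q a) (L : ℕ) (s : PairState Q) : 0 ≤ RLrow δ P L s := by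
  rw [RLrow_eq_sum_pairWordProb]
  exact Finset.sum_nonneg fun w _ => pairWordProb_nonneg hP _ _

theorem sInf_range_mul_RLrow_le_nsynProb (hP : ∀ q a, 0 ≤ P q a) (hπ : ∀ q, 0 ≤ π q) (L : ℕ)
    (s : PairState Q) : sInf (Set.range π) * RLrow δ P L s ≤ nsynProb δ P π L := by
  rw [RLrow_eq_sum_pairWordProb, Finset.mul_sum]
  refine Finset.sum_le_sum fun w _ => ?_
  unfold pairWordProb
  split_ifs with hs hw
  · exact absurd hw (not_isResetWord_of_isSome_stepWord_pairStep s.prop hs)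
  · calc sInf (Set.range π) * probWord P δ s.val.1 (List.ofFn w)
        ≤ π s.val.1 * probWord P δ s.val.1 (List.ofFn w) :=
          mul_le_mul_of_nonneg_right (csInf_le (Set.finite_range π).bddBelow ⟨_, rfl⟩)
            (probWord_nonneg hP _ _)
      _ ≤ Ppi δ P π (List.ofFn w) :=
          Finset.single_le_sum (f := fun q => π q * probWord P δ q (List.ofFn w))
            (fun q _ => mul_nonneg (hπ q) (probWord_nonneg hP q _)) (Finset.mem_univ _)
  · rw [mul_zero]
  · rw [mul_zero]
    exact Ppi_nonneg hP hπ _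

theorem nsynProb_le_sSup_range_mul_sum_RLrow (hP : ∀ q a, 0 ≤ P q a)
    (hP₀ : ∀ q a, δ q a = none → P q a = 0) (hπ : ∀ q, 0 ≤ π q) (L : ℕ) :
    nsynProb δ P π L ≤ sSup (Set.range π) * ∑ s : PairState Q, RLrow δ P L s := by
  have hmax : 0 ≤ sSup (Set.range π) := Real.iSup_nonneg hπ
  simp only [RLrow_eq_sum_pairWordProb]
  rw [Finset.sum_comm, Finset.mul_sum]
  refine Finset.sum_le_sum fun w _ => ?_
  split_ifs with hw
  · exact mul_nonneg hmax (Finset.sum_nonneg fun s _ => pairWordProb_nonneg hP _ _)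
  · calc Ppi δ P π (List.ofFn w)
        ≤ ∑ q, sSup (Set.range π) * probWord P δ q (List.ofFn w) :=
          Finset.sum_le_sum fun q _ => mul_le_mul_of_nonneg_right
            (le_csSup (Set.finite_range π).bddAbove ⟨q, rfl⟩) (probWord_nonneg hP q _)
      _ = sSup (Set.range π) * ∑ q, probWord P δ q (List.ofFn w) := (Finset.mul_sum ..).symm
      _ ≤ _ := mul_le_mul_of_nonneg_left (sum_probWord_le_sum_pairWordProb hP hP₀ hw) hmax

end PairMachine

theorem stmt2_general {Q A : Type*} [Fintype Q] [Fintype A] (M : EpsMachine Q A)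
    (π : Q → ℝ) (hπ : EpsIsStationary M.δ M.P π) (L : ℕ) :
    sInf (Set.range π) * maxRowSum (pairMatrix M.δ M.P ^ L) ≤ nsynProb M.δ M.P π L ∧
      nsynProb M.δ M.P π L ≤
        (Fintype.card Q : ℝ) ^ 2 * sSup (Set.range π) * maxRowSum (pairMatrix M.δ M.P ^ L) := by
  have hπ₀ : ∀ q, 0 ≤ π q := fun q => (hπ.1 q).le
  have hP₀ : ∀ q a, M.δ q a = none → M.P q a = 0 := fun q a => (M.zero_iff q a).2
  have hπmax : 0 ≤ sSup (Set.range π) := Real.iSup_nonneg hπ₀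
  set T := pairMatrix M.δ M.P ^ L
  constructor
  · rcases isEmpty_or_nonempty (PairState Q) with hQ₂ | hQ₂
    · rw [maxRowSum_of_isEmpty, mul_zero]
      exact Finset.sum_nonneg fun w _ => ite_nonneg le_rfl (Ppi_nonneg M.nonneg hπ₀ _)
    · obtain ⟨s, hs⟩ := exists_sum_eq_maxRowSum T
      rw [← hs]
      exact sInf_range_mul_RLrow_le_nsynProb M.nonneg hπ₀ L s
  · calc nsynProb M.δ M.P π L ≤ sSup (Set.range π) * ∑ s, RLrow M.δ M.P L s :=
          nsynProb_le_sSup_range_mul_sum_RLrow M.nonneg hP₀ hπ₀ L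
      _ ≤ sSup (Set.range π) * (Fintype.card (PairState Q) * maxRowSum T) := by
          gcongr
          exact sum_sum_le_card_mul_maxRowSum T
      _ ≤ sSup (Set.range π) * ((Fintype.card Q : ℝ) ^ 2 * maxRowSum T) := by
          gcongr
          · exact maxRowSum_nonneg T (RLrow_nonneg M.nonneg L)
          · exact card_pairState_le
      _ = (Fintype.card Q : ℝ) ^ 2 * sSup (Set.range π) * maxRowSum T := by ring

/-- for an exact ε-machine with `n` states and steady state distribution `π`,
`π_min · ‖T(A₂)^L‖₁ ≤ P_π(NSYN_L) ≤ n² · π_max · ‖T(A₂)^L‖₁` for each `L ≥ 1`, where `‖·‖₁`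
is the maximum row sum. -/
theorem stmt2 {Q A : Type*} [Fintype Q] [Fintype A] (M : EpsMachine Q A)
    (hexact : IsExact M) (π : Q → ℝ) (hπ : EpsIsStationary M.δ M.P π) (L : ℕ) (hL : 1 ≤ L) :
    sInf (Set.range π) * maxRowSum (pairMatrix M.δ M.P ^ L) ≤ nsynProb M.δ M.P π L ∧
      nsynProb M.δ M.P π L ≤
        (Fintype.card Q : ℝ) ^ 2 * sSup (Set.range π) * maxRowSum (pairMatrix M.δ M.P ^ L) :=
  stmt2_general M π hπ L
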